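/- arXiv:1008.4952 — 2 statements merged into one kernel-verified Lean document; each statement's English description precedes it below -/
import Mathlib

section
/- Let G be a finitely generated group acting by isometries on a δ-hyperbolic geodesic metric space Y with basepoint p, let μ be a symmetric probability measure on G with finite support, and let p_i = g_i·p be the trajectory of the random walk. Suppose: (i) (linear progress) there are constants L > 0, A > 1, a > 0 such that for all n, P( L·n/A ≤ d(p₀, p_n) ≤ L·A·n ) ≥ 1 − e^{−a·n}; and (ii) (exponential decay of shadows) there are constants B > 0 and b > 0 such that for all y ∈ Y, all K ≥ 0 and all n, P( p_n ∈ S_{p₀}(y, K) ) ≤ B·e^{−b·(d(p₀,y) − K)}. Then for any K ≥ 0 there is a constant C₁ > 0 such that for all M > 0 and all n ≥ 2, P( the walk p₀, …, p_n is (K, M·log n)-unfolded ) ≥ 1 − n^{2−C₁·M}. -/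
/-!
STATEMENT 14 (Lemma `unfolded`): under linear progress and exponential decay of shadows,
a random walk of length `n` is `(K, M·log n)`-unfolded with probability at least
`1 - n^{2 - C₁·M}`.
-/

open scoped Classical BigOperators
open MeasureTheory

namespace SclPaper

section MetricDefs

variable {Y : Type*} [MetricSpace Y]

/-- `γ` restricted to `[a,b]` is a unit-speed geodesic. -/
def IsGeodesicOn (γ : ℝ → Y) (a b : ℝ) : Prop :=
  ∀ s ∈ Set.Icc a b, ∀ t ∈ Set.Icc a b, dist (γ s) (γ t) = |s - t|

/-- `γ` is a unit-speed geodesic from `x` to `y`, parameterized on `[0, dist x y]`. -/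
def GeodesicFromTo (γ : ℝ → Y) (x y : Y) : Prop :=
  γ 0 = x ∧ γ (dist x y) = y ∧ IsGeodesicOn γ 0 (dist x y)

/-- A geodesic metric space: any two points are joined by a geodesic. -/
def GeodesicSpace (Y : Type*) [MetricSpace Y] : Prop :=
  ∀ x y : Y, ∃ γ : ℝ → Y, GeodesicFromTo γ x y

/-- `Y` is `δ`-hyperbolic: geodesic triangles are `δ`-thin (each side is contained in the
`δ`-neighborhood of the union of the other two sides). -/
def GromovHyperbolic (Y : Type*) [MetricSpace Y] (δ : ℝ) : Prop :=
  ∀ (x y z : Y) (γ₁ γ₂ γ₃ : ℝ → Y),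
    GeodesicFromTo γ₁ x y → GeodesicFromTo γ₂ y z → GeodesicFromTo γ₃ z x →
    ∀ s ∈ Set.Icc (0 : ℝ) (dist x y),
      (∃ t ∈ Set.Icc (0 : ℝ) (dist y z), dist (γ₁ s) (γ₂ t) ≤ δ) ∨
      (∃ t ∈ Set.Icc (0 : ℝ) (dist z x), dist (γ₁ s) (γ₃ t) ≤ δ)

end MetricDefs

/-- Position of the walk after `i` steps, for a step sequence `s`. -/
def walkPos {G : Type*} [Group G] {n : ℕ} (s : Fin n → G) (i : ℕ) : G :=
  ((List.ofFn s).take i).prod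

/-- Probability, for the random walk of length `n` whose i.i.d. steps have law `μ`
(a probability measure supported in the finite set `T`), that the step sequence
satisfies the event `E`. -/
noncomputable def walkProb {G : Type*} (μ : G → ℝ) (T : Finset G) (n : ℕ)
    (E : (Fin n → G) → Prop) : ℝ :=
  ∑ s : Fin n → {x // x ∈ T}, (∏ i, μ (s i : G)) *
    (if E (fun i => (s i : G)) then 1 else 0)

/-- The shadow `S_p(y, K)`: points `r` such that every geodesic from `p` to `r` comes
within distance `K` of `y`. -/
def Shadow {Y : Type*} [MetricSpace Y] (p y : Y) (K : ℝ) : Set Y :=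
  {r | ∀ γ : ℝ → Y, GeodesicFromTo γ p r →
    ∃ t ∈ Set.Icc (0 : ℝ) (dist p r), dist (γ t) y ≤ K}


/-! ### Auxiliary lemmas: elementary finite probability theory for `walkProb` -/

section ProbAux
variable {G : Type*} (μ : G → ℝ) (T : Finset G)

lemma walkProb_nonneg (hμ0 : ∀ g, 0 ≤ μ g) (n : ℕ) (E : (Fin n → G) → Prop) :
    0 ≤ walkProb μ T n E := by
  apply Finset.sum_nonneg
  intro s _
  apply mul_nonneg (Finset.prod_nonneg fun i _ => hμ0 _)
  split <;> norm_num

lemma walkProb_mono (hμ0 : ∀ g, 0 ≤ μ g) (n : ℕ) {E F : (Fin n → G) → Prop}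
    (h : ∀ s, E s → F s) : walkProb μ T n E ≤ walkProb μ T n F := by
  apply Finset.sum_le_sum
  intro s _
  apply mul_le_mul_of_nonneg_left _ (Finset.prod_nonneg fun i _ => hμ0 _)
  by_cases hE : E (fun i => (s i : G))
  · simp [hE, h _ hE]
  · simp only [hE, if_false]; split <;> norm_num

lemma sum_prod_eq_one (hμsum : ∑ g ∈ T, μ g = 1) (n : ℕ) :
    ∑ s : Fin n → {x // x ∈ T}, (∏ i, μ (s i : G)) = 1 := by
  rw [← Fintype.piFinset_univ, ← Finset.prod_univ_sum
    (fun _ : Fin n => (Finset.univ : Finset {x // x ∈ T})) (fun _ x => μ (x : G))]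
  calc ∏ _i : Fin n, ∑ x : {x // x ∈ T}, μ (x : G)
      = ∏ _i : Fin n, (1:ℝ) := by
        refine Finset.prod_congr rfl fun i _ => ?_
        rw [Finset.sum_coe_sort T (fun g => μ g), hμsum]
    _ = 1 := Finset.prod_const_one

lemma walkProb_congr (n : ℕ) {E F : (Fin n → G) → Prop} (h : ∀ s, E s ↔ F s) :
    walkProb μ T n E = walkProb μ T n F := by
  unfold walkProb
  exact Finset.sum_congr rfl fun s _ => by rw [if_congr (h _) rfl rfl]

lemma walkProb_const (hμsum : ∑ g ∈ T, μ g = 1) (n : ℕ) (c : Prop) :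
    walkProb μ T n (fun _ => c) = if c then 1 else 0 := by
  unfold walkProb
  rw [← Finset.sum_mul, sum_prod_eq_one μ T hμsum, one_mul]

lemma walkProb_not (hμsum : ∑ g ∈ T, μ g = 1) (n : ℕ) (E : (Fin n → G) → Prop) :
    walkProb μ T n (fun s => ¬ E s) = 1 - walkProb μ T n E := by
  rw [eq_sub_iff_add_eq, add_comm]
  calc walkProb μ T n E + walkProb μ T n (fun s => ¬ E s)
      = ∑ s : Fin n → {x // x ∈ T}, (∏ i, μ (s i : G)) := by
        unfold walkProb
        rw [← Finset.sum_add_distrib]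
        refine Finset.sum_congr rfl fun s _ => ?_
        by_cases hE : E (fun i => (s i : G)) <;> simp [hE]
    _ = 1 := sum_prod_eq_one μ T hμsum n

lemma walkProb_or_le (hμ0 : ∀ g, 0 ≤ μ g) (n : ℕ) (E F : (Fin n → G) → Prop) :
    walkProb μ T n (fun s => E s ∨ F s) ≤ walkProb μ T n E + walkProb μ T n F := by
  unfold walkProb
  rw [← Finset.sum_add_distrib]
  apply Finset.sum_le_sum
  intro s _
  rw [← mul_add]
  apply mul_le_mul_of_nonneg_left _ (Finset.prod_nonneg fun i _ => hμ0 _)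
  by_cases hE : E (fun i => (s i : G)) <;> by_cases hF : F (fun i => (s i : G)) <;>
    simp [hE, hF]

lemma walkProb_exists_le (hμ0 : ∀ g, 0 ≤ μ g) (n : ℕ) {ι : Type*} (S : Finset ι)
    (E : ι → (Fin n → G) → Prop) :
    walkProb μ T n (fun s => ∃ x ∈ S, E x s) ≤ ∑ x ∈ S, walkProb μ T n (E x) := by
  unfold walkProb
  rw [Finset.sum_comm]
  apply Finset.sum_le_sum
  intro s _
  rw [← Finset.mul_sum]
  apply mul_le_mul_of_nonneg_left _ (Finset.prod_nonneg fun i _ => hμ0 _)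
  by_cases hE : ∃ x ∈ S, E x (fun i => (s i : G))
  · obtain ⟨x, hx, hEx⟩ := hE
    rw [if_pos ⟨x, hx, hEx⟩]
    have hnn : ∀ y ∈ S, (0:ℝ) ≤ (fun y => if E y (fun i => (s i : G)) then (1:ℝ) else 0) y :=
      fun y _ => by
        show (0:ℝ) ≤ if E y (fun i => (s i : G)) then (1:ℝ) else 0
        split <;> norm_num
    calc (1:ℝ) = if E x (fun i => (s i : G)) then 1 else 0 := by rw [if_pos hEx]
    _ ≤ _ := Finset.single_le_sum hnn hx
  · rw [if_neg hE]
    exact Finset.sum_nonneg fun y _ => by split <;> norm_num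

lemma comp_append {X Z : Type*} (f : X → Z) {i l : ℕ} (u : Fin i → X) (v : Fin l → X) :
    (fun k => f (Fin.append u v k)) = Fin.append (fun k => f (u k)) (fun k => f (v k)) := by
  funext k
  induction k using Fin.addCases <;> simp [Fin.append_left, Fin.append_right]

lemma walkProb_split (i l : ℕ) (E : (Fin (i + l) → G) → Prop) :
    walkProb μ T (i + l) E = ∑ u : Fin i → {x // x ∈ T}, (∏ k, μ (u k : G)) *
      walkProb μ T l (fun v => E (Fin.append (fun k => (u k : G)) v)) := by
  unfold walkProb
  rw [← Equiv.sum_comp (Fin.appendEquiv (α := {x // x ∈ T}) i l), Fintype.sum_prod_type]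
  refine Finset.sum_congr rfl fun u _ => ?_
  rw [Finset.mul_sum]
  refine Finset.sum_congr rfl fun v _ => ?_
  have hprod : (∏ k : Fin (i + l), μ ((Fin.appendEquiv i l (u, v)) k : G)) =
      (∏ k, μ (u k : G)) * (∏ k, μ (v k : G)) := by
    simp only [Fin.appendEquiv, Equiv.coe_fn_mk]
    rw [Fin.prod_univ_add]
    simp [Fin.append_left, Fin.append_right]
  have harg : (fun k => ((Fin.appendEquiv i l (u, v)) k : G)) =
      Fin.append (fun k => (u k : G)) (fun k => (v k : G)) := by
    simp only [Fin.appendEquiv, Equiv.coe_fn_mk]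
    exact comp_append _ u v
  rw [hprod, harg]
  ring

end ProbAux

section WalkAux
variable {G : Type*} [Group G] (μ : G → ℝ) (T : Finset G)

lemma walkPos_append_le {i l : ℕ} (u : Fin i → G) (v : Fin l → G) (k : ℕ) (hk : k ≤ i) :
    walkPos (Fin.append u v) k = walkPos u k := by
  unfold walkPos
  rw [List.ofFn_fin_append, List.take_append]
  have h1 : k - (List.ofFn u).length = 0 := by simp [hk]
  rw [h1, List.take_zero, List.append_nil]

lemma walkPos_append_add {i l : ℕ} (u : Fin i → G) (v : Fin l → G) (m : ℕ) :
    walkPos (Fin.append u v) (i + m) = walkPos u i * walkPos v m := by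
  unfold walkPos
  rw [List.ofFn_fin_append, List.take_append, List.prod_append]
  have h1 : (List.ofFn u).take (i + m) = List.ofFn u :=
    List.take_of_length_le (by simp)
  have h2 : i + m - (List.ofFn u).length = m := by simp
  have h3 : (List.ofFn u).take i = List.ofFn u := List.take_of_length_le (by simp)
  rw [h1, h2, h3]

/-- Conditioning: if an event only depends on the position at time `i` and on the relative
increment between times `i` and `j`, and the corresponding event for the relative walk of
length `j - i` has probability at most `ε` whatever the position at time `i` is, then the
event has probability at most `ε`. -/
lemma walkProb_cond (hμ0 : ∀ g, 0 ≤ μ g) (hμsum : ∑ g ∈ T, μ g = 1)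
    (i j n : ℕ) (hij : i ≤ j) (hjn : j ≤ n)
    (P : G → G → Prop) (ε : ℝ)
    (h : ∀ q : G, walkProb μ T (j - i) (fun w => P q (walkPos w (j - i))) ≤ ε) :
    walkProb μ T n (fun s => P (walkPos s i) ((walkPos s i)⁻¹ * walkPos s j)) ≤ ε := by
  obtain ⟨l, rfl⟩ : ∃ l, j = i + l := ⟨j - i, by omega⟩
  obtain ⟨r, rfl⟩ : ∃ r, n = (i + l) + r := ⟨n - (i + l), by omega⟩
  have hl : i + l - i = l := by omega
  rw [hl] at h
  rw [walkProb_split μ T (i + l) r]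
  have step1 : ∀ u : Fin (i + l) → {x // x ∈ T},
      walkProb μ T r (fun v =>
        P (walkPos (Fin.append (fun k => ((u k : G))) v) i)
          ((walkPos (Fin.append (fun k => ((u k : G))) v) i)⁻¹ *
            walkPos (Fin.append (fun k => ((u k : G))) v) (i + l))) =
      (if P (walkPos (fun k => ((u k : G))) i)
          ((walkPos (fun k => ((u k : G))) i)⁻¹ * walkPos (fun k => ((u k : G))) (i + l))
        then (1:ℝ) else 0) := by
    intro u
    rw [walkProb_congr μ T r (F := fun _ =>
      P (walkPos (fun k => ((u k : G))) i)
        ((walkPos (fun k => ((u k : G))) i)⁻¹ * walkPos (fun k => ((u k : G))) (i + l)))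
      (fun v => by rw [walkPos_append_le _ _ i (by omega), walkPos_append_le _ _ (i+l) le_rfl])]
    exact walkProb_const μ T hμsum r _
  calc ∑ u : Fin (i+l) → {x // x ∈ T}, (∏ k, μ (u k : G)) *
        walkProb μ T r (fun v =>
          P (walkPos (Fin.append (fun k => ((u k : G))) v) i)
            ((walkPos (Fin.append (fun k => ((u k : G))) v) i)⁻¹ *
              walkPos (Fin.append (fun k => ((u k : G))) v) (i + l)))
      = walkProb μ T (i + l) (fun s =>
          P (walkPos s i) ((walkPos s i)⁻¹ * walkPos s (i + l))) := by
        refine Finset.sum_congr rfl fun u _ => ?_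
        rw [step1 u]
    _ ≤ ε := by
        rw [walkProb_split μ T i l]
        have step2 : ∀ u : Fin i → {x // x ∈ T},
            walkProb μ T l (fun v =>
              P (walkPos (Fin.append (fun k => ((u k : G))) v) i)
                ((walkPos (Fin.append (fun k => ((u k : G))) v) i)⁻¹ *
                  walkPos (Fin.append (fun k => ((u k : G))) v) (i + l))) ≤ ε := by
          intro u
          rw [walkProb_congr μ T l (F := fun v =>
            P (walkPos (fun k => ((u k : G))) i) (walkPos v l))
            (fun v => by
              rw [walkPos_append_le _ _ i le_rfl, walkPos_append_add, inv_mul_cancel_left])]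
          exact h _
        calc ∑ u : Fin i → {x // x ∈ T}, (∏ k, μ (u k : G)) *
              walkProb μ T l (fun v =>
                P (walkPos (Fin.append (fun k => ((u k : G))) v) i)
                  ((walkPos (Fin.append (fun k => ((u k : G))) v) i)⁻¹ *
                    walkPos (Fin.append (fun k => ((u k : G))) v) (i + l)))
            ≤ ∑ u : Fin i → {x // x ∈ T}, (∏ k, μ (u k : G)) * ε := by
              refine Finset.sum_le_sum fun u _ => ?_
              exact mul_le_mul_of_nonneg_left (step2 u)
                (Finset.prod_nonneg fun k _ => hμ0 _)
          _ = ε := by rw [← Finset.sum_mul, sum_prod_eq_one μ T hμsum, one_mul]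

end WalkAux

/-! ### Auxiliary lemmas: elementary geodesic geometry -/

section GeoAux
variable {Y : Type*} [MetricSpace Y] {γ : ℝ → Y} {x y : Y}

lemma geo_dist_from (h : GeodesicFromTo γ x y) {t : ℝ} (ht : t ∈ Set.Icc 0 (dist x y)) :
    dist x (γ t) = t := by
  have h2 := h.2.2 0 ⟨le_rfl, dist_nonneg⟩ t ht
  rw [h.1] at h2
  rw [h2, zero_sub, abs_neg, abs_of_nonneg ht.1]

lemma geo_dist_to (h : GeodesicFromTo γ x y) {t : ℝ} (ht : t ∈ Set.Icc 0 (dist x y)) :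
    dist (γ t) y = dist x y - t := by
  have h2 := h.2.2 t ht (dist x y) ⟨dist_nonneg, le_rfl⟩
  rw [h.2.1] at h2
  rw [h2, abs_of_nonpos (by linarith [ht.2]), neg_sub]

lemma geo_reverse (h : GeodesicFromTo γ x y) :
    GeodesicFromTo (fun t => γ (dist x y - t)) y x := by
  refine ⟨by simpa using h.2.1, ?_, ?_⟩
  · simp only [dist_comm y x, sub_self]
    exact h.1
  · intro s hs t ht
    rw [dist_comm y x] at hs ht
    have hs' : dist x y - s ∈ Set.Icc 0 (dist x y) := ⟨by linarith [hs.2], by linarith [hs.1]⟩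
    have ht' : dist x y - t ∈ Set.Icc 0 (dist x y) := ⟨by linarith [ht.2], by linarith [ht.1]⟩
    rw [h.2.2 _ hs' _ ht']
    rw [show dist x y - s - (dist x y - t) = -(s - t) by ring, abs_neg]

lemma geo_const (x : Y) : GeodesicFromTo (fun _ => x) x x := by
  refine ⟨rfl, rfl, fun s hs t ht => ?_⟩
  simp only [dist_self] at hs ht ⊢
  have : s = 0 := le_antisymm hs.2 hs.1
  have : t = 0 := le_antisymm ht.2 ht.1
  subst this; subst ‹s = 0›; simp

end GeoAux

section CoreAux
variable {G : Type*} [Group G] {Y : Type*} [MetricSpace Y] [MulAction G Y]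

lemma dist_smul_eq (hiso : ∀ g : G, Isometry (fun y : Y => g • y)) (g : G) (x y : Y) :
    dist (g • x) (g • y) = dist x y := (hiso g).dist_eq x y

lemma geo_translate (hiso : ∀ g : G, Isometry (fun y : Y => g • y)) (g : G)
    {γ : ℝ → Y} {x y : Y} (h : GeodesicFromTo γ x y) :
    GeodesicFromTo (fun t => g • γ t) (g • x) (g • y) := by
  have hd : dist (g • x) (g • y) = dist x y := dist_smul_eq hiso g x y
  refine ⟨?_, ?_, fun s hs t ht => ?_⟩
  · show g • γ 0 = g • x
    rw [h.1]
  · show g • γ (dist (g • x) (g • y)) = g • y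
    rw [hd, h.2.1]
  · rw [hd] at hs ht
    show dist (g • γ s) (g • γ t) = _
    rw [dist_smul_eq hiso, h.2.2 s hs t ht]

/-- The geometric core: if `q·w·p` comes `K`-close to some geodesic from `p` to `q·p`, and
`w·p` is far from `p`, then `w·p` lies in a fixed shadow based at a point far along
the chosen geodesic `γq` from `q⁻¹·p` to `p`. -/
lemma core (δ : ℝ) (hδ : 0 ≤ δ)
    (hiso : ∀ g : G, Isometry (fun y : Y => g • y))
    (hgeo : GeodesicSpace Y) (hhyp : GromovHyperbolic Y δ) (p : Y)
    (K R : ℝ) (hK : 0 ≤ K) (hR : 1 ≤ R)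
    (q w : G) (γq : ℝ → Y) (hγq : GeodesicFromTo γq (q⁻¹ • p) p)
    (hprog : R + (K + δ) ≤ dist p (w • p))
    (hev : ∃ γ : ℝ → Y, GeodesicFromTo γ p (q • p) ∧
      ∃ t ∈ Set.Icc (0:ℝ) (dist p (q • p)), dist ((q * w) • p) (γ t) ≤ K) :
    R ≤ dist (q⁻¹ • p) p ∧
      (w • p) ∈ Shadow p (γq (dist (q⁻¹ • p) p - R)) (K + 2*δ) := by
  obtain ⟨γ, hγ, t, ht, hdist⟩ := hev
  set D := dist (q⁻¹ • p) p with hDdef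
  have hD : dist p (q • p) = D := by
    rw [hDdef, ← dist_smul_eq hiso q (q⁻¹ • p) p, smul_inv_smul]
  have hγ' : GeodesicFromTo (fun s => q⁻¹ • γ s) (q⁻¹ • p) p := by
    have := geo_translate hiso q⁻¹ hγ
    rwa [inv_smul_smul] at this
  set x1 := q⁻¹ • γ t with hx1
  have hx1w : dist (w • p) x1 ≤ K := by
    have : dist ((q * w) • p) (γ t) = dist (w • p) x1 := by
      rw [hx1, ← dist_smul_eq hiso q⁻¹ ((q * w) • p) (γ t), ← mul_smul, inv_mul_cancel_left]
    linarith [this ▸ hdist]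
  have hD' : dist (q⁻¹ • p) p = dist p (q • p) := hD.symm
  have htD : t ∈ Set.Icc (0:ℝ) (dist (q⁻¹ • p) p) := by rw [hD']; exact ht
  have hρ : GeodesicFromTo (fun s => γq (D - s)) p (q⁻¹ • p) := geo_reverse hγq
  have hcases := hhyp (q⁻¹ • p) p p (fun s => q⁻¹ • γ s) (fun _ => p) (fun s => γq (D - s))
    hγ' (geo_const p) hρ t htD
  have hwpfar : R + (K + δ) ≤ dist p (w • p) := hprog
  rcases hcases with ⟨t', _, hclose⟩ | ⟨t', ht', hclose⟩
  · exfalso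
    have h1 : dist x1 p ≤ δ := hclose
    have h2 : dist p (w • p) ≤ dist p x1 + dist x1 (w • p) := dist_triangle _ _ _
    rw [dist_comm p x1, dist_comm x1 (w • p)] at h2
    linarith [hx1w]
  · set x2 := γq (D - t') with hx2
    have hx1x2 : dist x1 x2 ≤ δ := hclose
    have hwx2 : dist (w • p) x2 ≤ K + δ :=
      le_trans (dist_triangle _ x1 _) (by linarith)
    rw [dist_comm p (q⁻¹ • p)] at ht'
    have hpx2 : dist p x2 = t' := by
      have := geo_dist_to hγq (t := D - t') ⟨by linarith [ht'.2], by linarith [ht'.1]⟩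
      rw [dist_comm]
      rw [hx2]
      rw [← hDdef] at this
      rw [this]; ring
    have hRt' : R ≤ t' := by
      have h3 : dist p (w • p) ≤ dist p x2 + dist x2 (w • p) := dist_triangle _ _ _
      rw [dist_comm x2 (w • p)] at h3
      rw [hpx2] at h3
      linarith [hwx2]
    have hRD : R ≤ D := le_trans hRt' ht'.2
    refine ⟨hRD, ?_⟩
    intro σ hσ
    set d0 := dist p (w • p) with hd0
    have hγ1 : GeodesicFromTo (fun s => γq (D - s)) p x2 := by
      refine ⟨hρ.1, ?_, ?_⟩
      · show γq (D - dist p x2) = x2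
        rw [hpx2]
      · intro s hs u hu
        rw [hpx2] at hs hu
        have hsub : ∀ v : ℝ, v ∈ Set.Icc (0:ℝ) t' → D - v ∈ Set.Icc (0:ℝ) D := by
          intro v hv
          exact ⟨by linarith [hv.2, ht'.2], by linarith [hv.1]⟩
        rw [hγq.2.2 _ (hsub s hs) _ (hsub u hu)]
        rw [show D - s - (D - u) = -(s - u) by ring, abs_neg]
    obtain ⟨σ₂, hσ₂⟩ := hgeo x2 (w • p)
    have hσr : GeodesicFromTo (fun u => σ (dist p (w • p) - u)) (w • p) p := geo_reverse hσ
    have h4 := hhyp p x2 (w • p) (fun s => γq (D - s)) σ₂ (fun u => σ (dist p (w • p) - u))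
      hγ1 hσ₂ hσr R (by constructor <;> [linarith; (rw [hpx2]; exact hRt')])
    rcases h4 with ⟨t₂, ht₂, hcl⟩ | ⟨t₂, ht₂, hcl⟩
    · have h5 : dist (σ₂ t₂) (w • p) = dist x2 (w • p) - t₂ := geo_dist_to hσ₂ ht₂
      have h6 : dist x2 (w • p) ≤ K + δ := by rw [dist_comm]; exact hwx2
      refine ⟨d0, ⟨dist_nonneg, le_rfl⟩, ?_⟩
      have h7 : σ d0 = w • p := hσ.2.1
      rw [h7]
      calc dist (w • p) (γq (D - R)) ≤ dist (w • p) (σ₂ t₂) + dist (σ₂ t₂) (γq (D - R)) :=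
            dist_triangle _ _ _
        _ ≤ (K + δ) + δ := by
            refine add_le_add ?_ (by rw [dist_comm]; exact hcl)
            rw [dist_comm]
            rw [h5]; linarith [ht₂.1, h6]
        _ ≤ K + 2*δ := by linarith
    · rw [dist_comm (w • p) p] at ht₂
      refine ⟨d0 - t₂, ⟨by linarith [ht₂.2], by linarith [ht₂.1]⟩, ?_⟩
      rw [dist_comm]
      calc dist (γq (D - R)) (σ (d0 - t₂)) = dist (γq (D - R)) (σ (dist p (w•p) - t₂)) := by
            rw [hd0]
        _ ≤ δ := hcl
        _ ≤ K + 2*δ := by linarith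

/-- The per-conditioning bound: for a fixed position `q` at time `i`, the probability that
the relative walk of length `m` brings `q·w·p` within `K` of some geodesic `[p, q·p]` is at
most the sum of a linear-progress failure term and a shadow term. -/
lemma per_q_bound (δ : ℝ) (hδ : 0 ≤ δ)
    (hiso : ∀ g : G, Isometry (fun y : Y => g • y))
    (hgeo : GeodesicSpace Y) (hhyp : GromovHyperbolic Y δ) (p : Y)
    (μ : G → ℝ) (T : Finset G)
    (hμ0 : ∀ g, 0 ≤ μ g) (hμsum : ∑ g ∈ T, μ g = 1)
    (L A a : ℝ)
    (hprog : ∀ n : ℕ, 1 - Real.exp (-a * n) ≤ walkProb μ T n (fun s =>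
        L * n / A ≤ dist p (walkPos s n • p) ∧ dist p (walkPos s n • p) ≤ L * A * n))
    (B b : ℝ) (hB : 0 < B)
    (hshadow : ∀ (y : Y) (K : ℝ), 0 ≤ K → ∀ n : ℕ,
        walkProb μ T n (fun s => walkPos s n • p ∈ Shadow p y K) ≤
          B * Real.exp (-b * (dist p y - K)))
    (K : ℝ) (hK : 0 ≤ K) (m : ℕ) (hm : K + δ + 1 ≤ L * m / A) (q : G) :
    walkProb μ T m (fun v => ∃ γ : ℝ → Y, GeodesicFromTo γ p (q • p) ∧
      ∃ t ∈ Set.Icc (0:ℝ) (dist p (q • p)), dist ((q * walkPos v m) • p) (γ t) ≤ K) ≤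
    Real.exp (-a * m) + B * Real.exp (-b * (L * m / A - (2*K + 3*δ))) := by
  set R : ℝ := L * m / A - (K + δ) with hRdef
  have hR1 : 1 ≤ R := by rw [hRdef]; linarith
  have step1 : walkProb μ T m (fun v => ∃ γ : ℝ → Y, GeodesicFromTo γ p (q • p) ∧
      ∃ t ∈ Set.Icc (0:ℝ) (dist p (q • p)), dist ((q * walkPos v m) • p) (γ t) ≤ K) ≤
      walkProb μ T m (fun v =>
        (¬ (L * m / A ≤ dist p (walkPos v m • p) ∧ dist p (walkPos v m • p) ≤ L * A * m)) ∨
        ((∃ γ : ℝ → Y, GeodesicFromTo γ p (q • p) ∧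
          ∃ t ∈ Set.Icc (0:ℝ) (dist p (q • p)), dist ((q * walkPos v m) • p) (γ t) ≤ K) ∧
          L * m / A ≤ dist p (walkPos v m • p))) := by
    apply walkProb_mono μ T hμ0
    intro v hv
    by_cases hp : L * m / A ≤ dist p (walkPos v m • p) ∧ dist p (walkPos v m • p) ≤ L * A * m
    · exact Or.inr ⟨hv, hp.1⟩
    · exact Or.inl hp
  have step2 : walkProb μ T m (fun v =>
      ¬ (L * m / A ≤ dist p (walkPos v m • p) ∧ dist p (walkPos v m • p) ≤ L * A * m)) ≤
      Real.exp (-a * m) := by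
    rw [walkProb_not μ T hμsum]
    linarith [hprog m]
  have step3 : walkProb μ T m (fun v =>
      (∃ γ : ℝ → Y, GeodesicFromTo γ p (q • p) ∧
        ∃ t ∈ Set.Icc (0:ℝ) (dist p (q • p)), dist ((q * walkPos v m) • p) (γ t) ≤ K) ∧
        L * m / A ≤ dist p (walkPos v m • p)) ≤
      B * Real.exp (-b * (L * m / A - (2*K + 3*δ))) := by
    obtain ⟨γq, hγq⟩ := hgeo (q⁻¹ • p) p
    by_cases hDR : R ≤ dist (q⁻¹ • p) p
    · have hsub : ∀ v : Fin m → G,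
          ((∃ γ : ℝ → Y, GeodesicFromTo γ p (q • p) ∧
            ∃ t ∈ Set.Icc (0:ℝ) (dist p (q • p)), dist ((q * walkPos v m) • p) (γ t) ≤ K) ∧
            L * m / A ≤ dist p (walkPos v m • p)) →
          walkPos v m • p ∈ Shadow p (γq (dist (q⁻¹ • p) p - R)) (K + 2*δ) := by
        intro v ⟨hE, hlo⟩
        exact (core δ hδ hiso hgeo hhyp p K R hK hR1 q (walkPos v m) γq hγq
          (by rw [hRdef]; linarith) hE).2
      calc walkProb μ T m _ ≤ walkProb μ T m
            (fun v => walkPos v m • p ∈ Shadow p (γq (dist (q⁻¹ • p) p - R)) (K + 2*δ)) :=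
            walkProb_mono μ T hμ0 m hsub
        _ ≤ B * Real.exp (-b * (dist p (γq (dist (q⁻¹ • p) p - R)) - (K + 2*δ))) :=
            hshadow _ (K + 2*δ) (by linarith) m
        _ = B * Real.exp (-b * (L * m / A - (2*K + 3*δ))) := by
            have hdy : dist p (γq (dist (q⁻¹ • p) p - R)) = R := by
              have h8 := geo_dist_to hγq (t := dist (q⁻¹ • p) p - R)
                ⟨by linarith, by linarith⟩
              rw [dist_comm, h8]; ring
            rw [hdy, hRdef]
            ring_nf
    · have hsub : ∀ v : Fin m → G,
          ((∃ γ : ℝ → Y, GeodesicFromTo γ p (q • p) ∧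
            ∃ t ∈ Set.Icc (0:ℝ) (dist p (q • p)), dist ((q * walkPos v m) • p) (γ t) ≤ K) ∧
            L * m / A ≤ dist p (walkPos v m • p)) → False := by
        intro v ⟨hE, hlo⟩
        exact hDR (core δ hδ hiso hgeo hhyp p K R hK hR1 q (walkPos v m) γq hγq
          (by rw [hRdef]; linarith) hE).1
      calc walkProb μ T m _ ≤ walkProb μ T m (fun _ => False) :=
            walkProb_mono μ T hμ0 m hsub
        _ = 0 := by rw [walkProb_const μ T hμsum m False, if_neg (fun h => h)]
        _ ≤ _ := by positivity
  calc walkProb μ T m _ ≤ _ := step1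
    _ ≤ _ := walkProb_or_le μ T hμ0 m _ _
    _ ≤ Real.exp (-a * m) + B * Real.exp (-b * (L * m / A - (2*K + 3*δ))) :=
        add_le_add step2 step3

end CoreAux

set_option maxHeartbeats 1000000 in
theorem unfolded
    {G : Type*} [Group G] {Y : Type*} [MetricSpace Y] [MulAction G Y]
    (δ : ℝ) (hδ : 0 ≤ δ)
    (hiso : ∀ g : G, Isometry (fun y : Y => g • y))
    (hgeo : GeodesicSpace Y) (hhyp : GromovHyperbolic Y δ)
    (p : Y) (hFG : Group.FG G)
    (μ : G → ℝ) (T : Finset G)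
    (hμ0 : ∀ g, 0 ≤ μ g) (hμsupp : ∀ g, μ g ≠ 0 → g ∈ T) (hμsum : ∑ g ∈ T, μ g = 1)
    (hμsym : ∀ g, μ g⁻¹ = μ g)
    -- (i) linear progress
    (L A a : ℝ) (hL : 0 < L) (hA : 1 < A) (ha : 0 < a)
    (hprog : ∀ n : ℕ, 1 - Real.exp (-a * n) ≤ walkProb μ T n (fun s =>
        L * n / A ≤ dist p (walkPos s n • p) ∧ dist p (walkPos s n • p) ≤ L * A * n))
    -- (ii) exponential decay of shadows
    (B b : ℝ) (hB : 0 < B) (hb : 0 < b)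
    (hshadow : ∀ (y : Y) (K : ℝ), 0 ≤ K → ∀ n : ℕ,
        walkProb μ T n (fun s => walkPos s n • p ∈ Shadow p y K) ≤
          B * Real.exp (-b * (dist p y - K))) :
    ∀ K : ℝ, 0 ≤ K → ∃ C₁ > (0 : ℝ), ∀ M : ℝ, 0 < M → ∀ n : ℕ, 2 ≤ n →
      1 - (n : ℝ) ^ (2 - C₁ * M) ≤ walkProb μ T n (fun s =>
        -- the walk is (K, M log n)-unfolded
        ∀ i j : ℕ, i < j → j ≤ n → M * Real.log n < (j : ℝ) - (i : ℝ) →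
          ∀ γ : ℝ → Y, GeodesicFromTo γ p (walkPos s i • p) →
            ∀ t ∈ Set.Icc (0 : ℝ) (dist p (walkPos s i • p)),
              K < dist (walkPos s j • p) (γ t)) := by
  intro K hK
  have hA0 : (0:ℝ) < A := lt_trans one_pos hA
  have hlog2 : (0:ℝ) < Real.log 2 := Real.log_pos one_lt_two
  set c : ℝ := min a (b * L / A) with hcdef
  have hc : 0 < c := lt_min ha (by positivity)
  have hca : c ≤ a := min_le_left _ _
  have hcb : c ≤ b * L / A := min_le_right _ _
  set C' : ℝ := 1 + B * Real.exp (b * (2*K + 3*δ)) with hC'def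
  have hC'1 : 1 < C' := by
    have := Real.exp_pos (b * (2*K + 3*δ))
    rw [hC'def]; nlinarith
  have hC'0 : 0 < C' := lt_trans one_pos hC'1
  have hlog4C' : 0 < Real.log (4 * C') := Real.log_pos (by linarith)
  have hKδ1 : (0:ℝ) < K + δ + 1 := by linarith
  have hden : 0 < A * (K + δ + 1) := mul_pos hA0 hKδ1
  set C₁ : ℝ := min (min (c/2) (c * Real.log 2 / Real.log (4 * C')))
      (2 * L * Real.log 2 / (A * (K + δ + 1))) with hC₁def
  have hC₁pos : 0 < C₁ := by
    refine lt_min (lt_min (by positivity) (by positivity)) (by positivity)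
  refine ⟨C₁, hC₁pos, ?_⟩
  intro M hM n hn2
  have hn2' : (2:ℝ) ≤ (n:ℝ) := by exact_mod_cast hn2
  have hn0 : (0:ℝ) < (n:ℝ) := by linarith
  have hn1 : (1:ℝ) ≤ (n:ℝ) := by linarith
  by_cases hcase : C₁ * M ≤ 2
  · -- trivial case: the bound is nonpositive
    have h1 : (1:ℝ) ≤ (n:ℝ) ^ (2 - C₁ * M) := by
      calc (1:ℝ) = (n:ℝ) ^ (0:ℝ) := (Real.rpow_zero _).symm
      _ ≤ _ := Real.rpow_le_rpow_of_exponent_le hn1 (by linarith)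
    exact le_trans (by linarith) (walkProb_nonneg μ T hμ0 n _)
  · push_neg at hcase
    have hlogn : Real.log 2 ≤ Real.log n := Real.log_le_log two_pos hn2'
    have hlogn0 : 0 < Real.log n := lt_of_lt_of_le hlog2 hlogn
    have hC₁1 : C₁ ≤ c/2 := le_trans (min_le_left _ _) (min_le_left _ _)
    have hC₁2 : C₁ ≤ c * Real.log 2 / Real.log (4 * C') :=
      le_trans (min_le_left _ _) (min_le_right _ _)
    have hC₁3 : C₁ ≤ 2 * L * Real.log 2 / (A * (K + δ + 1)) := min_le_right _ _
    have hnot := walkProb_not μ T hμsum n (fun s =>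
        ∀ i j : ℕ, i < j → j ≤ n → M * Real.log n < (j : ℝ) - (i : ℝ) →
          ∀ γ : ℝ → Y, GeodesicFromTo γ p (walkPos s i • p) →
            ∀ t ∈ Set.Icc (0 : ℝ) (dist p (walkPos s i • p)),
              K < dist (walkPos s j • p) (γ t))
    suffices hsuff : walkProb μ T n (fun s => ¬
        (∀ i j : ℕ, i < j → j ≤ n → M * Real.log n < (j : ℝ) - (i : ℝ) →
          ∀ γ : ℝ → Y, GeodesicFromTo γ p (walkPos s i • p) →
            ∀ t ∈ Set.Icc (0 : ℝ) (dist p (walkPos s i • p)),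
              K < dist (walkPos s j • p) (γ t))) ≤ (n:ℝ) ^ (2 - C₁ * M) by
      linarith
    -- the list of bad pairs
    set S : Finset (ℕ × ℕ) := Finset.range (n+1) ×ˢ Finset.range (n+1) with hSdef
    set Ebad : ℕ × ℕ → (Fin n → G) → Prop := fun pr s =>
      pr.1 < pr.2 ∧ pr.2 ≤ n ∧ M * Real.log n < (pr.2 : ℝ) - (pr.1 : ℝ) ∧
      ∃ γ : ℝ → Y, GeodesicFromTo γ p (walkPos s pr.1 • p) ∧
        ∃ t ∈ Set.Icc (0:ℝ) (dist p (walkPos s pr.1 • p)),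
          dist (walkPos s pr.2 • p) (γ t) ≤ K with hEbaddef
    have hcover : ∀ s : Fin n → G, (¬
        (∀ i j : ℕ, i < j → j ≤ n → M * Real.log n < (j : ℝ) - (i : ℝ) →
          ∀ γ : ℝ → Y, GeodesicFromTo γ p (walkPos s i • p) →
            ∀ t ∈ Set.Icc (0 : ℝ) (dist p (walkPos s i • p)),
              K < dist (walkPos s j • p) (γ t))) → ∃ pr ∈ S, Ebad pr s := by
      intro s hs
      push_neg at hs
      obtain ⟨i, j, hij, hjn, hm, γ, hγ, t, ht, hd⟩ := hs
      refine ⟨(i, j), ?_, hij, hjn, hm, γ, hγ, t, ht, hd⟩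
      rw [hSdef, Finset.mem_product, Finset.mem_range, Finset.mem_range]
      omega
    -- uniform bound for each pair
    have hpair : ∀ pr ∈ S, walkProb μ T n (Ebad pr) ≤ C' * (n:ℝ) ^ (-(c * M)) := by
      rintro ⟨i, j⟩ _
      have hrp0 : (0:ℝ) ≤ (n:ℝ) ^ (-(c * M)) := Real.rpow_nonneg hn0.le _
      by_cases hvalid : i < j ∧ j ≤ n ∧ M * Real.log n < (j:ℝ) - (i:ℝ)
      · obtain ⟨hij, hjn, hmm⟩ := hvalid
        have hmcast : ((j - i : ℕ) : ℝ) = (j:ℝ) - (i:ℝ) := by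
          push_cast [Nat.cast_sub hij.le]; ring
        have hmlog : M * Real.log n < ((j - i : ℕ) : ℝ) := by rw [hmcast]; exact hmm
        have hmpos : (0:ℝ) ≤ ((j - i : ℕ) : ℝ) := Nat.cast_nonneg _
        -- the relative walk is long enough
        have hKm : K + δ + 1 ≤ L * ((j - i : ℕ) : ℝ) / A := by
          have h11 : C₁ * (A * (K + δ + 1)) ≤ 2 * L * Real.log 2 :=
            (le_div_iff₀ hden).mp hC₁3
          have h12 : 2 * (A * (K + δ + 1)) < (C₁ * M) * (A * (K + δ + 1)) :=
            mul_lt_mul_of_pos_right hcase hden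
          have h14 : (C₁ * (A * (K + δ + 1))) * M ≤ (2 * L * Real.log 2) * M :=
            mul_le_mul_of_nonneg_right h11 hM.le
          have h13 : (C₁ * M) * (A * (K + δ + 1)) = (C₁ * (A * (K + δ + 1))) * M := by ring
          have h18 : (2 * L * Real.log 2) * M = 2 * (L * (M * Real.log 2)) := by ring
          have h15 : A * (K + δ + 1) < L * (M * Real.log 2) := by linarith
          have h16 : L * (M * Real.log 2) ≤ L * (M * Real.log n) :=
            mul_le_mul_of_nonneg_left
              (mul_le_mul_of_nonneg_left hlogn hM.le) hL.le
          have h17 : L * (M * Real.log n) < L * ((j - i : ℕ) : ℝ) :=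
            mul_lt_mul_of_pos_left hmlog hL
          rw [le_div_iff₀ hA0]
          have h19 : (K + δ + 1) * A = A * (K + δ + 1) := by ring
          linarith
        -- conditional bound via per_q_bound
        have hcond : walkProb μ T n (fun s =>
            (fun (q w : G) => ∃ γ : ℝ → Y, GeodesicFromTo γ p (q • p) ∧
              ∃ t ∈ Set.Icc (0:ℝ) (dist p (q • p)),
                dist ((q * w) • p) (γ t) ≤ K)
              (walkPos s i) ((walkPos s i)⁻¹ * walkPos s j)) ≤
            Real.exp (-a * ((j - i : ℕ) : ℝ)) +
              B * Real.exp (-b * (L * ((j - i : ℕ) : ℝ) / A - (2*K + 3*δ))) := by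
          refine walkProb_cond μ T hμ0 hμsum i j n hij.le hjn
            (fun (q w : G) => ∃ γ : ℝ → Y, GeodesicFromTo γ p (q • p) ∧
              ∃ t ∈ Set.Icc (0:ℝ) (dist p (q • p)),
                dist ((q * w) • p) (γ t) ≤ K)
            (Real.exp (-a * ((j - i : ℕ) : ℝ)) +
              B * Real.exp (-b * (L * ((j - i : ℕ) : ℝ) / A - (2*K + 3*δ))))
            (fun q => ?_)
          exact per_q_bound δ hδ hiso hgeo hhyp p μ T hμ0 hμsum L A a hprog B b hB
            hshadow K hK (j - i) hKm q
        have hEbad_le : walkProb μ T n (Ebad (i, j)) ≤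
            Real.exp (-a * ((j - i : ℕ) : ℝ)) +
              B * Real.exp (-b * (L * ((j - i : ℕ) : ℝ) / A - (2*K + 3*δ))) := by
          refine le_trans (walkProb_mono μ T hμ0 n (fun s hs => ?_)) hcond
          obtain ⟨_, _, _, γ, hγ, t, ht, hd⟩ := hs
          exact ⟨γ, hγ, t, ht, by rwa [mul_inv_cancel_left]⟩
        -- numeric estimates
        have e1 : Real.exp (-a * ((j - i : ℕ) : ℝ)) ≤ (n:ℝ) ^ (-(c * M)) := by
          rw [Real.rpow_def_of_pos hn0]
          apply Real.exp_le_exp.mpr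
          have f1 : c * (M * Real.log n) ≤ c * ((j - i : ℕ) : ℝ) :=
            mul_le_mul_of_nonneg_left hmlog.le hc.le
          have f2 : c * ((j - i : ℕ) : ℝ) ≤ a * ((j - i : ℕ) : ℝ) :=
            mul_le_mul_of_nonneg_right hca hmpos
          have f3 : Real.log (n:ℝ) * -(c * M) = -(c * (M * Real.log n)) := by ring
          rw [f3]; linarith
        have e2 : B * Real.exp (-b * (L * ((j - i : ℕ) : ℝ) / A - (2*K + 3*δ))) ≤
            B * Real.exp (b * (2*K + 3*δ)) * (n:ℝ) ^ (-(c * M)) := by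
          have f0 : -b * (L * ((j - i : ℕ) : ℝ) / A - (2*K + 3*δ)) =
              b * (2*K + 3*δ) + (-(b * L / A * ((j - i : ℕ) : ℝ))) := by ring
          rw [f0, Real.exp_add, ← mul_assoc]
          apply mul_le_mul_of_nonneg_left _ (by positivity)
          rw [Real.rpow_def_of_pos hn0]
          apply Real.exp_le_exp.mpr
          have f1 : c * (M * Real.log n) ≤ c * ((j - i : ℕ) : ℝ) :=
            mul_le_mul_of_nonneg_left hmlog.le hc.le
          have f2 : c * ((j - i : ℕ) : ℝ) ≤ b * L / A * ((j - i : ℕ) : ℝ) :=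
            mul_le_mul_of_nonneg_right hcb hmpos
          have f3 : Real.log (n:ℝ) * -(c * M) = -(c * (M * Real.log n)) := by ring
          rw [f3]; linarith
        calc walkProb μ T n (Ebad (i, j)) ≤ _ := hEbad_le
          _ ≤ (n:ℝ) ^ (-(c * M)) + B * Real.exp (b * (2*K + 3*δ)) * (n:ℝ) ^ (-(c * M)) :=
              add_le_add e1 e2
          _ = C' * (n:ℝ) ^ (-(c * M)) := by rw [hC'def]; ring
      · -- degenerate pair: the event is empty
        have hsub : ∀ s : Fin n → G, Ebad (i, j) s → False := by
          intro s hs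
          exact hvalid ⟨hs.1, hs.2.1, hs.2.2.1⟩
        calc walkProb μ T n (Ebad (i, j)) ≤ walkProb μ T n (fun _ => False) :=
              walkProb_mono μ T hμ0 n hsub
          _ = 0 := by rw [walkProb_const μ T hμsum n False, if_neg (fun h => h)]
          _ ≤ _ := by positivity
    -- summation and final estimate
    have hcard : (S.card : ℝ) = ((n:ℝ) + 1)^2 := by
      rw [hSdef, Finset.card_product, Finset.card_range]
      push_cast; ring
    have hfinal : ((n:ℝ) + 1)^2 * (C' * (n:ℝ) ^ (-(c * M))) ≤ (n:ℝ) ^ (2 - C₁ * M) := by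
      have hexp1 : 0 ≤ (c - C₁) * M := mul_nonneg (by linarith) hM.le
      have hb3 : 4 * C' ≤ (2:ℝ) ^ (c / C₁) := by
        have h10 : C₁ * Real.log (4 * C') ≤ c * Real.log 2 := by
          have := (le_div_iff₀ hlog4C').mp hC₁2
          linarith
        have h9 : Real.log (4 * C') ≤ Real.log 2 * (c / C₁) := by
          rw [show Real.log 2 * (c / C₁) = (c * Real.log 2) / C₁ by ring,
            le_div_iff₀ hC₁pos]
          linarith
        calc 4 * C' = Real.exp (Real.log (4 * C')) := (Real.exp_log (by linarith)).symm
          _ ≤ Real.exp (Real.log 2 * (c / C₁)) := Real.exp_le_exp.mpr h9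
          _ = (2:ℝ) ^ (c / C₁) := (Real.rpow_def_of_pos two_pos _).symm
      have hb2 : (2:ℝ) ^ (c / C₁) ≤ (2:ℝ) ^ ((c - C₁) * M) := by
        apply Real.rpow_le_rpow_of_exponent_le one_le_two
        have hstep : c / C₁ ≤ (c/2) * M := by
          rw [div_le_iff₀ hC₁pos]
          have h20 : (c/2) * 2 ≤ (c/2) * (C₁ * M) :=
            mul_le_mul_of_nonneg_left hcase.le (by positivity)
          have h21 : (c/2) * (C₁ * M) = c/2 * M * C₁ := by ring
          linarith
        have hstep2 : (c/2) * M ≤ (c - C₁) * M :=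
          mul_le_mul_of_nonneg_right (by linarith) hM.le
        linarith
      have hb1 : (2:ℝ) ^ ((c - C₁) * M) ≤ (n:ℝ) ^ ((c - C₁) * M) :=
        Real.rpow_le_rpow (by norm_num) hn2' hexp1
      have hkey : 4 * C' * (n:ℝ) ^ (-((c - C₁) * M)) ≤ 1 := by
        rw [Real.rpow_neg hn0.le]
        have hpos : 0 < (n:ℝ) ^ ((c - C₁) * M) := Real.rpow_pos_of_pos hn0 _
        calc 4 * C' * ((n:ℝ) ^ ((c - C₁) * M))⁻¹ ≤
            (n:ℝ) ^ ((c - C₁) * M) * ((n:ℝ) ^ ((c - C₁) * M))⁻¹ :=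
              mul_le_mul_of_nonneg_right (le_trans (le_trans hb3 hb2) hb1)
                (inv_nonneg.mpr hpos.le)
          _ = 1 := mul_inv_cancel₀ hpos.ne'
      have hsplit : (n:ℝ) ^ (-(c * M)) = (n:ℝ) ^ (-(C₁ * M)) * (n:ℝ) ^ (-((c - C₁) * M)) := by
        rw [← Real.rpow_add hn0]; congr 1; ring
      have h2rpow : (n:ℝ) ^ ((2:ℝ) - C₁ * M) = (n:ℝ)^2 * (n:ℝ) ^ (-(C₁ * M)) := by
        rw [show (2:ℝ) - C₁ * M = 2 + (-(C₁ * M)) by ring, Real.rpow_add hn0,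
          Real.rpow_two]
      calc ((n:ℝ) + 1)^2 * (C' * (n:ℝ) ^ (-(c * M)))
          ≤ (4 * (n:ℝ)^2) * (C' * (n:ℝ) ^ (-(c * M))) := by
            apply mul_le_mul_of_nonneg_right (by nlinarith) (by positivity)
        _ = ((n:ℝ)^2 * (n:ℝ) ^ (-(C₁ * M))) * (4 * C' * (n:ℝ) ^ (-((c - C₁) * M))) := by
            rw [hsplit]; ring
        _ ≤ ((n:ℝ)^2 * (n:ℝ) ^ (-(C₁ * M))) * 1 := by
            apply mul_le_mul_of_nonneg_left hkey (by positivity)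
        _ = (n:ℝ) ^ (2 - C₁ * M) := by rw [h2rpow]; ring
    calc walkProb μ T n (fun s => ¬
          (∀ i j : ℕ, i < j → j ≤ n → M * Real.log n < (j : ℝ) - (i : ℝ) →
            ∀ γ : ℝ → Y, GeodesicFromTo γ p (walkPos s i • p) →
              ∀ t ∈ Set.Icc (0 : ℝ) (dist p (walkPos s i • p)),
                K < dist (walkPos s j • p) (γ t)))
        ≤ walkProb μ T n (fun s => ∃ pr ∈ S, Ebad pr s) :=
          walkProb_mono μ T hμ0 n hcover
      _ ≤ ∑ pr ∈ S, walkProb μ T n (Ebad pr) := walkProb_exists_le μ T hμ0 n S Ebad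
      _ ≤ ∑ _pr ∈ S, C' * (n:ℝ) ^ (-(c * M)) := Finset.sum_le_sum hpair
      _ = (S.card : ℝ) * (C' * (n:ℝ) ^ (-(c * M))) := by
          rw [Finset.sum_const, nsmul_eq_mul]
      _ = ((n:ℝ) + 1)^2 * (C' * (n:ℝ) ^ (-(c * M))) := by rw [hcard]
      _ ≤ (n:ℝ) ^ (2 - C₁ * M) := hfinal


end SclPaper
end

section
/- Let N > 0, let ℓ > 0, and let {β_j}_{j ∈ J} be a finite family of pairwise disjoint closed subintervals of [0, N], each of length ℓ, with total length |J|·ℓ ≥ 9N/100. Let 0 < ε ≤ 1 and let A ⊆ [0, N] be a Lebesgue measurable subset with measure at least (1−ε)·N. Then the number of indices j ∈ J for which the measure of A ∩ β_j is at least (1 − 12√ε)·ℓ is at least (1 − √ε)·|J|. -/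
/-!
STATEMENT 17 (Lemma `pigeonhole`): if `{β_j}` is a family of pairwise disjoint closed
subintervals of `[0,N]` of length `ℓ` with total length at least `9N/100`, and
`A ⊆ [0,N]` has measure at least `(1-ε)N`, then at least `(1-√ε)|J|` of the intervals
satisfy `|A ∩ β_j| ≥ (1 - 12√ε)ℓ`.
-/

open scoped Classical
open MeasureTheory

namespace SclPaper

theorem pigeonhole (N ℓ ε : ℝ) (hN : 0 < N) (hℓ : 0 < ℓ) (hε : 0 < ε) (hε1 : ε ≤ 1)
    {ι : Type*} (J : Finset ι) (β : ι → ℝ)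
    (hsub : ∀ j ∈ J, 0 ≤ β j ∧ β j + ℓ ≤ N)
    (hdisj : ∀ j ∈ J, ∀ j' ∈ J, j ≠ j' →
      Disjoint (Set.Icc (β j) (β j + ℓ)) (Set.Icc (β j') (β j' + ℓ)))
    (htot : 9 * N / 100 ≤ (J.card : ℝ) * ℓ)
    (A : Set ℝ) (hAmeas : MeasurableSet A) (hAsub : A ⊆ Set.Icc 0 N)
    (hAvol : (1 - ε) * N ≤ (volume A).toReal) :
    (1 - Real.sqrt ε) * (J.card : ℝ) ≤
      ((J.filter fun j =>
          (1 - 12 * Real.sqrt ε) * ℓ ≤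
            (volume (A ∩ Set.Icc (β j) (β j + ℓ))).toReal).card : ℝ) := by
  set s := Real.sqrt ε with hsdef
  have hs0 : 0 < s := Real.sqrt_pos.mpr hε
  have hs1 : s ≤ 1 := by
    rw [hsdef, show (1:ℝ) = Real.sqrt 1 by simp]
    exact Real.sqrt_le_sqrt hε1
  have hs2 : s * s = ε := Real.mul_self_sqrt hε.le
  set p : ι → Prop := fun j =>
    (1 - 12 * s) * ℓ ≤ (volume (A ∩ Set.Icc (β j) (β j + ℓ))).toReal with hp
  set G := J.filter p with hG
  set B := J.filter (fun j => ¬ p j) with hB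
  have hcard : G.card + B.card = J.card :=
    Finset.card_filter_add_card_filter_not (p := p)
  -- the complements C j
  set C : ι → Set ℝ := fun j => Set.Icc (β j) (β j + ℓ) \ A with hC
  have hCmeas : ∀ j, MeasurableSet (C j) := fun j => measurableSet_Icc.diff hAmeas
  have hIccvol : ∀ j : ι, volume (Set.Icc (β j) (β j + ℓ)) = ENNReal.ofReal ℓ := by
    intro j
    rw [Real.volume_Icc]
    congr 1
    ring
  have hCfin : ∀ j : ι, volume (C j) ≠ ⊤ := by
    intro j
    refine ne_top_of_le_ne_top ?_ (measure_mono Set.diff_subset)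
    rw [hIccvol j]
    exact ENNReal.ofReal_ne_top
  have hAIfin : ∀ j : ι, volume (A ∩ Set.Icc (β j) (β j + ℓ)) ≠ ⊤ := by
    intro j
    refine ne_top_of_le_ne_top ?_ (measure_mono Set.inter_subset_right)
    rw [hIccvol j]
    exact ENNReal.ofReal_ne_top
  -- key lower bound for bad intervals
  have hbad : ∀ j ∈ B, 12 * s * ℓ ≤ (volume (C j)).toReal := by
    intro j hj
    have hjB := Finset.mem_filter.mp hj
    have hlt : ¬ ((1 - 12 * s) * ℓ ≤ (volume (A ∩ Set.Icc (β j) (β j + ℓ))).toReal) := hjB.2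
    push_neg at hlt
    have hsplit : volume (Set.Icc (β j) (β j + ℓ) ∩ A) + volume (C j)
        = volume (Set.Icc (β j) (β j + ℓ)) :=
      measure_inter_add_diff _ hAmeas
    have hsplit' : (volume (A ∩ Set.Icc (β j) (β j + ℓ))).toReal + (volume (C j)).toReal = ℓ := by
      rw [Set.inter_comm] at hsplit
      have := congrArg ENNReal.toReal hsplit
      rwa [ENNReal.toReal_add (hAIfin j) (hCfin j), hIccvol j,
        ENNReal.toReal_ofReal hℓ.le] at this
    nlinarith [hlt, hsplit']
  -- disjointness of C on B
  have hpd : Set.PairwiseDisjoint (↑B : Set ι) C := by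
    intro a ha b hb hab
    have haJ : a ∈ J := (Finset.mem_filter.mp ha).1
    have hbJ : b ∈ J := (Finset.mem_filter.mp hb).1
    exact ((hdisj a haJ b hbJ hab).mono Set.diff_subset Set.diff_subset)
  have hunion : volume (⋃ j ∈ B, C j) = ∑ j ∈ B, volume (C j) :=
    measure_biUnion_finset hpd (fun j _ => hCmeas j)
  -- the union sits inside Icc 0 N \ A
  have hsubU : (⋃ j ∈ B, C j) ⊆ Set.Icc 0 N \ A := by
    intro x hx
    simp only [Set.mem_iUnion] at hx
    obtain ⟨j, hj, hxj⟩ := hx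
    have hjJ : j ∈ J := (Finset.mem_filter.mp hj).1
    obtain ⟨h1, h2⟩ := hsub j hjJ
    exact ⟨⟨le_trans h1 hxj.1.1, le_trans hxj.1.2 h2⟩, hxj.2⟩
  have hbigfin : volume (Set.Icc (0:ℝ) N \ A) ≠ ⊤ := by
    refine ne_top_of_le_ne_top ?_ (measure_mono Set.diff_subset)
    rw [Real.volume_Icc]
    exact ENNReal.ofReal_ne_top
  have hbig : (volume (Set.Icc (0:ℝ) N \ A)).toReal ≤ ε * N := by
    have hsplit : volume (Set.Icc (0:ℝ) N ∩ A) + volume (Set.Icc (0:ℝ) N \ A)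
        = volume (Set.Icc (0:ℝ) N) := measure_inter_add_diff _ hAmeas
    rw [Set.inter_eq_right.mpr hAsub] at hsplit
    have hAfin : volume A ≠ ⊤ := by
      refine ne_top_of_le_ne_top ?_ (measure_mono hAsub)
      rw [Real.volume_Icc]
      exact ENNReal.ofReal_ne_top
    have := congrArg ENNReal.toReal hsplit
    rw [ENNReal.toReal_add hAfin hbigfin, Real.volume_Icc,
      ENNReal.toReal_ofReal (by linarith : (0:ℝ) ≤ N - 0)] at this
    nlinarith [hAvol, this]
  -- sum bound
  have hsum : ∑ j ∈ B, (volume (C j)).toReal ≤ ε * N := by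
    have h1 : ∑ j ∈ B, (volume (C j)).toReal = (∑ j ∈ B, volume (C j)).toReal :=
      (ENNReal.toReal_sum (fun j _ => hCfin j)).symm
    rw [h1, ← hunion]
    refine le_trans (ENNReal.toReal_mono hbigfin (measure_mono hsubU)) hbig
  have hBbound : (B.card : ℝ) * (12 * s * ℓ) ≤ ε * N := by
    calc (B.card : ℝ) * (12 * s * ℓ) = ∑ _j ∈ B, 12 * s * ℓ := by
          rw [Finset.sum_const, nsmul_eq_mul]
      _ ≤ ∑ j ∈ B, (volume (C j)).toReal := Finset.sum_le_sum hbad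
      _ ≤ ε * N := hsum
  -- arithmetic finale
  have hBle : (B.card : ℝ) ≤ s * (J.card : ℝ) := by
    have hNle : N ≤ 100 / 9 * ((J.card : ℝ) * ℓ) := by linarith
    have h1 : (B.card : ℝ) * (12 * s * ℓ) ≤ s * s * (100 / 9 * ((J.card : ℝ) * ℓ)) := by
      rw [hs2]
      nlinarith [hε, hNle]
    have h2 : (B.card : ℝ) * (12 * s) ≤ s * s * (100 / 9) * (J.card : ℝ) :=
      le_of_mul_le_mul_right (by nlinarith [h1]) hℓ
    have h3 : (B.card : ℝ) * s ≤ (s * (J.card : ℝ)) * s := by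
      nlinarith [h2, hs0, hs1, Nat.cast_nonneg (α := ℝ) J.card,
        mul_nonneg (mul_nonneg hs0.le hs0.le) (Nat.cast_nonneg (α := ℝ) J.card)]
    exact le_of_mul_le_mul_right h3 hs0
  have hcardR : (G.card : ℝ) + (B.card : ℝ) = (J.card : ℝ) := by
    exact_mod_cast congrArg (Nat.cast : ℕ → ℝ) hcard
  have : (1 - s) * (J.card : ℝ) ≤ (G.card : ℝ) := by nlinarith [hBle, hcardR, Nat.cast_nonneg (α := ℝ) J.card]
  exact this
end SclPaper
end
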